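/- Let K' = [[K*, v*, x*],[−v*ᵀ, 0, 0],[−x*ᵀ, 0, 0]] with K* ∈ so(n), v*,x* ∈ ℝⁿ linearly independent, and let P be the orthogonal projection of ℝⁿ onto span{v*, x*}^⊥. Then for each even k, the sum of all principal (k+4)×(k+4) minors of K' whose index sets include both n+1 and n+2 equals (‖v*‖²‖x*‖² − (v*·x*)²) · tr(Λᵏ(PK*P)). -/

import Mathlib

/-!
Let `V` be the `2 × n` matrix with rows `v*, x*` and `D = diag(1, …, 1, 0, 0)`. The left-hand side
is the coefficient of `X ^ (k + 4)` in `det (D + X • K')`, and `tr(Λᵏ M)` is the coefficient of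
`X ^ k` in `det (1 + X • M)`. After reindexing, `D + X • K'` is the bordered matrix
`[[1 + X K*, X Vᵀ], [-X V, 0]]`. Since `1 - P = Vᵀ (V Vᵀ)⁻¹ V`, the difference `K* - P K* P` has the
form `Vᵀ Y + Z V`, which block row and column operations with the border remove. The new corner
`1 + X P K* P` fixes the columns of `Vᵀ`, so the determinant factors as
`det (1 + X P K* P) · det (X² V Vᵀ)`. Hence
`det (D + X • K') = X⁴ · det (V Vᵀ) · det (1 + X P K* P)`, and `det (V Vᵀ)` is the Gram determinant.
-/

/-- The skew-symmetric matrix `K' = [[K*, v*, x*],[−v*ᵀ, 0, 0],[−x*ᵀ, 0, 0]]`. -/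
def Kprime (n : ℕ) (K : Matrix (Fin n) (Fin n) ℝ) (v x : Fin n → ℝ) :
    Matrix (Fin (n + 2)) (Fin (n + 2)) ℝ :=
  Matrix.of fun i j =>
    if hi : i.val < n then
      if hj : j.val < n then K ⟨i.val, hi⟩ ⟨j.val, hj⟩
      else if j.val = n then v ⟨i.val, hi⟩
      else x ⟨i.val, hi⟩
    else if hj : j.val < n then
      (if i.val = n then -v ⟨j.val, hj⟩ else -x ⟨j.val, hj⟩)
    else 0

open Matrix Polynomial

namespace Matrix

variable {R : Type*} [CommRing R]

section PrincipalMinors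

variable {ι : Type*} [Fintype ι]

section

variable [DecidableEq ι]

theorem det_diagonal_add_eq_sum_det_submatrix (d : ι → R) (M : Matrix ι ι R) :
    (diagonal d + M).det =
      ∑ s : Finset ι, (∏ i ∈ sᶜ, d i) * (M.submatrix ((↑) : s → ι) (↑)).det := by
  let D : (ι → R) [⋀^ι]→ₗ[R] R := detRowAlternating
  have hrows (s : Finset ι) : s.piecewise M.row (diagonal d).row =
      fun i => (if i ∈ s then 1 else d i) • s.piecewise M.row (row 1) i := by
    funext i j
    by_cases hi : i ∈ s <;> simp [hi, row, Finset.piecewise, diagonal_apply, one_apply]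
  change D ((diagonal d).row + M.row) = _
  rw [add_comm, D.map_add_univ]
  refine Finset.sum_congr rfl fun s _ => ?_
  rw [hrows, D.map_smul_univ, smul_eq_mul, ← Finset.prod_compl_mul_prod s,
    Finset.prod_congr rfl fun i hi => if_neg (Finset.mem_compl.1 hi),
    Finset.prod_congr rfl fun i hi => if_pos hi, Finset.prod_const_one, mul_one]
  exact congrArg _ (det_piecewise_one_eq_submatrix_det M s)

theorem coeff_det_diagonal_add_X_smul (T : Finset ι) (M : Matrix ι ι R) (j : ℕ) :
    (diagonal (fun i => if i ∈ T then (0 : R[X]) else 1) + (X : R[X]) • M.map C).det.coeff j =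
      ∑ s with T ⊆ s ∧ s.card = j, (M.submatrix ((↑) : s → ι) (↑)).det := by
  have hprod (s : Finset ι) :
      ∏ i ∈ sᶜ, (if i ∈ T then (0 : R[X]) else 1) = if T ⊆ s then 1 else 0 := by
    split_ifs with hT
    · exact Finset.prod_eq_one fun i hi => if_neg fun hiT => Finset.mem_compl.1 hi (hT hiT)
    · obtain ⟨i, hiT, his⟩ := Finset.not_subset.1 hT
      exact Finset.prod_eq_zero (Finset.mem_compl.2 his) (if_pos hiT)
  rw [det_diagonal_add_eq_sum_det_submatrix, finsetSum_coeff, Finset.sum_filter]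
  refine Finset.sum_congr rfl fun s _ => ?_
  have hminor : ((X : R[X]) • M.map C).submatrix (Subtype.val : s → ι) Subtype.val =
      (X : R[X]) • ((M.submatrix Subtype.val Subtype.val).map C : Matrix s s R[X]) := rfl
  rw [hprod, hminor, det_smul, ← RingHom.mapMatrix_apply, ← RingHom.map_det, Fintype.card_coe,
    mul_comm (X ^ _)]
  by_cases hT : T ⊆ s <;> simp [hT, eq_comm]

end

theorem sum_dite_det_submatrix_orderEmbOfFin [LinearOrder ι] (p : Finset ι → Prop)
    [DecidablePred p] (M : Matrix ι ι R) (k : ℕ) :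
    (∑ s : Finset ι, if h : s.card = k ∧ p s then
        (M.submatrix (fun t : Fin k => s.orderEmbOfFin h.1 t)
          (fun t => s.orderEmbOfFin h.1 t)).det
      else 0) =
      ∑ s with s.card = k ∧ p s, (M.submatrix ((↑) : s → ι) (↑)).det := by
  rw [Finset.sum_filter]
  refine Finset.sum_congr rfl fun s _ => ?_
  split_ifs with h
  · rw [← det_submatrix_equiv_self (s.orderIsoOfFin h.1).toEquiv, submatrix_submatrix]
    rfl
  · rfl

end PrincipalMinors

section BorderedMatrices

variable {m n : Type*} [Fintype m] [DecidableEq m] [Fintype n] [DecidableEq n]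

theorem det_fromBlocks_add_mul_add_mul_zero₂₂ (A : Matrix n n R) (B : Matrix n m R)
    (D : Matrix m n R) (Y : Matrix m n R) (Z : Matrix n m R) :
    (fromBlocks (A + B * Y + Z * D) B D 0).det = (fromBlocks A B D 0).det := by
  have h : fromBlocks (A + B * Y + Z * D) B D 0 =
      fromBlocks 1 Z 0 1 * fromBlocks A B D 0 * fromBlocks 1 0 Y 1 := by
    simp only [fromBlocks_multiply, Matrix.one_mul, Matrix.mul_one, Matrix.zero_mul,
      Matrix.mul_zero, add_zero, zero_add]
    congr 1
    abel
  rw [h, det_mul, det_mul, det_fromBlocks_zero₂₁, det_fromBlocks_zero₁₂]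
  simp

theorem det_fromBlocks_zero₂₂_of_mul_eq_self {C : Matrix n n R} {B : Matrix n m R}
    (hCB : C * B = B) (D : Matrix m n R) :
    (fromBlocks C B D 0).det = C.det * (-(D * B)).det := by
  have h : fromBlocks C B D 0 * fromBlocks 1 (-B) 0 1 = fromBlocks C 0 D (-(D * B)) := by
    simp [fromBlocks_multiply, hCB]
  rw [← det_fromBlocks_zero₁₂, ← h, det_mul, det_fromBlocks_zero₂₁]
  simp

theorem eq_one_sub_transpose_mul_inv_mul {V : Matrix m n R} {P : Matrix n n R}
    (hG : IsUnit (V * Vᵀ).det) (hPV : P * Vᵀ = 0) (hfix : ∀ y, V *ᵥ y = 0 → P *ᵥ y = y) :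
    P = 1 - Vᵀ * (V * Vᵀ)⁻¹ * V := by
  set Q := Vᵀ * (V * Vᵀ)⁻¹ * V
  have hPQ : P * Q = 0 := by simp only [Q, ← Matrix.mul_assoc, hPV, Matrix.zero_mul]
  have hVQ : V * (1 - Q) = 0 := by
    rw [Matrix.mul_sub, Matrix.mul_one, ← Matrix.mul_assoc, ← Matrix.mul_assoc,
      mul_nonsing_inv _ hG, Matrix.one_mul, sub_self]
  have hfixQ : P * (1 - Q) = 1 - Q := by
    ext i j
    have hcol : V *ᵥ (fun l => (1 - Q) l j) = 0 := by
      funext a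
      simpa [mul_apply, mulVec, dotProduct] using congrFun (congrFun hVQ a) j
    simpa [mul_apply, mulVec, dotProduct] using congrFun (hfix _ hcol) i
  calc P = P * (1 - Q) := by rw [Matrix.mul_sub, Matrix.mul_one, hPQ, sub_zero]
    _ = 1 - Q := hfixQ

theorem det_fromBlocks_one_add_X_smul_eq_det_compress {V : Matrix m n R} {P : Matrix n n R}
    (hG : IsUnit (V * Vᵀ).det) (hP : P = 1 - Vᵀ * (V * Vᵀ)⁻¹ * V) (K : Matrix n n R) :
    (fromBlocks (1 + (X : R[X]) • K.map C) ((X : R[X]) • V.map C)ᵀ (-((X : R[X]) • V.map C))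
        0).det =
      X ^ (2 * Fintype.card m) * C (V * Vᵀ).det * (1 + (X : R[X]) • (P * K * P).map C).det := by
  set W : Matrix m n R[X] := (X : R[X]) • V.map C
  have hPV : P * Vᵀ = 0 := by
    rw [hP, Matrix.sub_mul, Matrix.one_mul, Matrix.mul_assoc, Matrix.mul_assoc,
      nonsing_inv_mul _ hG, Matrix.mul_one, sub_self]
  obtain ⟨Y, Z, hK⟩ :
      ∃ (Y : Matrix m n R) (Z : Matrix n m R), K = P * K * P + Vᵀ * Y + Z * V := by
    have hQ : 1 - P = Vᵀ * (V * Vᵀ)⁻¹ * V := by rw [hP, sub_sub_cancel]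
    refine ⟨(V * Vᵀ)⁻¹ * V * K, P * K * Vᵀ * (V * Vᵀ)⁻¹, ?_⟩
    calc K = P * K * P + (1 - P) * K + P * K * (1 - P) := by noncomm_ring
      _ = _ := by rw [hQ]; simp only [Matrix.mul_assoc]
  have hsplit : 1 + (X : R[X]) • K.map C =
      (1 + (X : R[X]) • (P * K * P).map C) + Wᵀ * Y.map C + (-Z.map C) * (-W) := by
    have hVY : Wᵀ * Y.map C = (X : R[X]) • (Vᵀ * Y).map C := by
      rw [Matrix.map_mul, transpose_map, ← Matrix.smul_mul, ← transpose_smul]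
    have hZV : (-Z.map C) * (-W) = (X : R[X]) • (Z * V).map C := by
      rw [Matrix.neg_mul, Matrix.mul_neg, neg_neg, Matrix.map_mul, Matrix.mul_smul]
    rw [hVY, hZV, add_assoc, add_assoc, ← smul_add, ← smul_add, ← Matrix.map_add _ (map_add C),
      ← Matrix.map_add _ (map_add C), ← add_assoc, ← hK]
  have hCW : (1 + (X : R[X]) • (P * K * P).map C) * Wᵀ = Wᵀ := by
    have hPKPV : (P * K * P).map C * (V.map C)ᵀ = 0 := by
      rw [← transpose_map, ← Matrix.map_mul, Matrix.mul_assoc, hPV, Matrix.mul_zero,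
        Matrix.map_zero _ (map_zero C)]
    rw [Matrix.add_mul, Matrix.one_mul, transpose_smul, Matrix.smul_mul, Matrix.mul_smul, hPKPV,
      smul_zero, smul_zero, add_zero]
  have hWW : W * Wᵀ = ((X : R[X]) ^ 2) • (V * Vᵀ).map C := by
    rw [transpose_smul, Matrix.smul_mul, Matrix.mul_smul, smul_smul, ← pow_two, Matrix.map_mul,
      transpose_map]
  have hG' : ((V * Vᵀ).map C).det = C (V * Vᵀ).det := (RingHom.map_det C _).symm
  rw [hsplit, det_fromBlocks_add_mul_add_mul_zero₂₂, det_fromBlocks_zero₂₂_of_mul_eq_self hCW,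
    Matrix.neg_mul, neg_neg, hWW, det_smul, hG', pow_mul]
  ring

end BorderedMatrices

theorem det_of_mul_transpose_fin_two {n : Type*} [Fintype n] (v x : n → R) :
    (of ![v, x] * (of ![v, x])ᵀ).det =
      (∑ i, v i ^ 2) * (∑ i, x i ^ 2) - (∑ i, v i * x i) ^ 2 := by
  simp only [det_fin_two, mul_apply, transpose_apply, of_apply, cons_val_zero, cons_val_one,
    pow_two]
  rw [Finset.sum_congr rfl fun i _ => mul_comm (x i) (v i)]

theorem isUnit_det_mul_transpose {m n : Type*} [Fintype m] [DecidableEq m] [Fintype n]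
    {V : Matrix m n ℝ} (hV : LinearIndependent ℝ V.row) : IsUnit (V * Vᵀ).det := by
  have hpos := (PosDef.mul_conjTranspose_self V (vecMul_injective_iff.2 hV)).det_pos
  rw [conjTranspose_eq_transpose_of_trivial] at hpos
  exact hpos.ne'.isUnit

end Matrix

-- The border rows and columns of `K'`, numbered `n + 1, n + 2` in the paper.
def borderIndices (n : ℕ) : Finset (Fin (n + 2)) := {Fin.natAdd n 0, Fin.natAdd n 1}

theorem Kprime_submatrix_finSumFinEquiv {n : ℕ} (K : Matrix (Fin n) (Fin n) ℝ)
    (V : Matrix (Fin 2) (Fin n) ℝ) :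
    (Kprime n K (V 0) (V 1)).submatrix finSumFinEquiv finSumFinEquiv = fromBlocks K Vᵀ (-V) 0 := by
  ext (i | i) (j | j)
  · simp [Kprime]
  · fin_cases j <;> simp [Kprime]
  · fin_cases i <;> simp [Kprime]
  · simp [Kprime]

theorem mem_borderIndices {n : ℕ} (i : Fin (n + 2)) : i ∈ borderIndices n ↔ n ≤ (i : ℕ) := by
  simp only [borderIndices, Finset.mem_insert, Finset.mem_singleton, Fin.ext_iff, Fin.val_natAdd]
  omega

theorem diagonal_borderIndices_submatrix_finSumFinEquiv {α : Type*} [Zero α] [One α] {n : ℕ} :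
    (diagonal fun i : Fin (n + 2) => if i ∈ borderIndices n then (0 : α) else 1).submatrix
      finSumFinEquiv finSumFinEquiv = fromBlocks 1 0 0 0 := by
  refine Matrix.ext fun i j => ?_
  rcases i with i | i <;> rcases j with j | j <;>
    simp [diagonal_apply, one_apply, mem_borderIndices, Fin.ext_iff, i.isLt.not_ge]
  omega

theorem det_diagonal_add_X_smul_Kprime {n : ℕ} (K P : Matrix (Fin n) (Fin n) ℝ)
    {V : Matrix (Fin 2) (Fin n) ℝ} (hG : IsUnit (V * Vᵀ).det)
    (hP : P = 1 - Vᵀ * (V * Vᵀ)⁻¹ * V) :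
    (diagonal (fun i : Fin (n + 2) => if i ∈ borderIndices n then (0 : ℝ[X]) else 1) +
        (X : ℝ[X]) • (Kprime n K (V 0) (V 1)).map C).det =
      X ^ 4 * C (V * Vᵀ).det * (1 + (X : ℝ[X]) • (P * K * P).map C).det := by
  rw [← det_submatrix_equiv_self finSumFinEquiv, show 4 = 2 * Fintype.card (Fin 2) from rfl,
    ← det_fromBlocks_one_add_X_smul_eq_det_compress hG hP]
  congr 1
  calc _ = fromBlocks 1 0 0 0 + (X : ℝ[X]) • (fromBlocks K Vᵀ (-V) 0).map C := by
        rw [← diagonal_borderIndices_submatrix_finSumFinEquiv, ← Kprime_submatrix_finSumFinEquiv]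
        rfl
    _ = _ := by
        rw [fromBlocks_map, fromBlocks_smul, fromBlocks_add, Matrix.map_neg _ (map_neg C),
          smul_neg]
        simp [transpose_map]

/-- Let `K' = [[K*, v*, x*],[−v*ᵀ, 0, 0],[−x*ᵀ, 0, 0]]` with `K* ∈ so(n)` and `v*, x*`
linearly independent, and let `P` be the orthogonal projection of `ℝⁿ` onto
`span{v*, x*}^⊥`.  For each even `k`, the sum of all principal `(k+4)×(k+4)` minors of `K'`
whose index sets contain both `n+1` and `n+2` equals
`(‖v*‖²‖x*‖² − (v*·x*)²) · tr(Λᵏ(PK*P))`, where `tr(Λᵏ M)` is the sum of all principal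
`k×k` minors of `M`. -/
theorem Kprime_minors_sum (n : ℕ) (K : Matrix (Fin n) (Fin n) ℝ)
    (v x : Fin n → ℝ)
    (hindep : LinearIndependent ℝ ![v, x])
    (P : Matrix (Fin n) (Fin n) ℝ)
    -- `P` is the orthogonal projection onto `span{v*, x*}^⊥`
    (hPv : P.mulVec v = 0) (hPx : P.mulVec x = 0)
    (hPfix : ∀ y : Fin n → ℝ, (∑ i, v i * y i) = 0 → (∑ i, x i * y i) = 0 →
      P.mulVec y = y)
    (k : ℕ) :
    (∑ s : Finset (Fin (n + 2)),
      if h : s.card = k + 4 ∧ (⟨n, by omega⟩ : Fin (n + 2)) ∈ s ∧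
          (⟨n + 1, by omega⟩ : Fin (n + 2)) ∈ s then
        ((Kprime n K v x).submatrix (fun t : Fin (k + 4) => s.orderEmbOfFin h.1 t)
          (fun t => s.orderEmbOfFin h.1 t)).det
      else 0) =
    ((∑ i, (v i) ^ 2) * (∑ i, (x i) ^ 2) - (∑ i, v i * x i) ^ 2) *
      ∑ s : Finset (Fin n),
        if h : s.card = k then
          ((P * K * P).submatrix (fun t : Fin k => s.orderEmbOfFin h t)
            (fun t => s.orderEmbOfFin h t)).det
        else 0 := by
  set V : Matrix (Fin 2) (Fin n) ℝ := of ![v, x]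
  have hG : IsUnit (V * Vᵀ).det := isUnit_det_mul_transpose hindep
  have hPV : P * Vᵀ = 0 := by
    ext i j
    fin_cases j
    · simpa [V, mul_apply, mulVec, dotProduct] using congrFun hPv i
    · simpa [V, mul_apply, mulVec, dotProduct] using congrFun hPx i
  have hP : P = 1 - Vᵀ * (V * Vᵀ)⁻¹ * V :=
    eq_one_sub_transpose_mul_inv_mul hG hPV fun y hy => hPfix y (congrFun hy 0) (congrFun hy 1)
  have hcoeff := congrArg (coeff · (k + 4)) (det_diagonal_add_X_smul_Kprime K P hG hP)
  rw [coeff_det_diagonal_add_X_smul, mul_assoc, coeff_X_pow_mul, coeff_C_mul,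
    coeff_det_one_add_X_smul_eq_sum_minors, Finset.powersetCard_eq_filter, Finset.powerset_univ,
    show V 0 = v from rfl, show V 1 = x from rfl] at hcoeff
  have hRHS := sum_dite_det_submatrix_orderEmbOfFin (fun _ => True) (P * K * P) k
  simp only [and_true] at hRHS
  rw [sum_dite_det_submatrix_orderEmbOfFin (fun s => _ ∈ s ∧ _ ∈ s), hRHS,
    ← det_of_mul_transpose_fin_two, ← hcoeff]
  refine Finset.sum_congr (Finset.filter_congr fun s _ => ?_) fun _ _ => rfl
  rw [borderIndices, Finset.insert_subset_iff, Finset.singleton_subset_iff, and_comm]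
  rfl
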